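/- There is no derivation in the system IL of a sequent A ⊢ I in which A is an I-free α-formula (one in which the constant I does not occur). -/

import Mathlib

/-- Prime α-formulae: a propositional letter, or an implication between α-formulae.
α-formulae are formulae with `⊗` strictly associative and `I` a strict unit; hence an
α-formula is faithfully represented as the list of its prime factors: the empty list
is the constant `I` and `⊗` is concatenation of lists. -/
inductive PForm : Type
  | atom : ℕ → PForm
  | imp : List PForm → List PForm → PForm

/-- α-formulae. -/
abbrev AForm : Type := List PForm

/-- Derivability in the system `IL`.  Sequents are `G ⊢ A` with `G` and `A`
α-formulae; axioms `A ⊢ A`; rules: interchange, cut, `→⊢`, `⊢→` and `⊗⊢⊗`. -/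
inductive ILDeriv : AForm → AForm → Prop
  | ax (A : AForm) : ILDeriv A A
  | interchange {G A B E D : AForm} :
      ILDeriv (G ++ A ++ B ++ E) D → ILDeriv (G ++ B ++ A ++ E) D
  | cut {C A G E D : AForm} :
      ILDeriv C A → ILDeriv (G ++ A ++ E) D → ILDeriv (G ++ C ++ E) D
  | impL {C A B G D : AForm} :
      ILDeriv C A → ILDeriv (B ++ G) D → ILDeriv (C ++ [PForm.imp A B] ++ G) D
  | impR {A G C : AForm} : ILDeriv (A ++ G) C → ILDeriv G [PForm.imp A C]
  | tensR {A B C E : AForm} : ILDeriv A C → ILDeriv B E → ILDeriv (A ++ B) (C ++ E)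

mutual
  /-- A prime α-formula in which the constant `I` does not occur (recall that in the
  strict representation `I` is the empty list of prime factors). -/
  def PForm.Ifree : PForm → Prop
    | .atom _ => True
    | .imp A B => A ≠ [] ∧ B ≠ [] ∧ AForm.IfreeList A ∧ AForm.IfreeList B
  /-- All prime α-formulae of the list are `I`-free. -/
  def AForm.IfreeList : List PForm → Prop
    | [] => True
    | x :: xs => x.Ifree ∧ AForm.IfreeList xs
end

/-- An α-formula in which the constant `I` does not occur. -/
def AForm.Ifree (A : AForm) : Prop := A ≠ [] ∧ AForm.IfreeList A

/-!
Interpret α-formulae as subsets of a commutative monoid `M`, a phase semantics: `⊗` is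
the pointwise sum, `I` is `{0}`, and `A → B` is the residual `{m | ∀ a ∈ A, a + m ∈ B}`.
Every rule of `IL` preserves inclusion, so a derivable sequent `G ⊢ D` gives
`⟦G⟧ ⊆ ⟦D⟧`. If the letters denote all of a nontrivial group such as `ℤ`, then so does
every `I`-free α-formula, since `univ + S = univ` for nonempty `S`; but `⟦I⟧ = {0}`.
-/

open Pointwise Set

variable {M : Type*}

section Semantics

variable [AddCommMonoid M]

mutual
  def PForm.interp (v : ℕ → Set M) : PForm → Set M
    | .atom n => v n
    | .imp A B => {m | ∀ a ∈ AForm.interp v A, a + m ∈ AForm.interp v B}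
  def AForm.interp (v : ℕ → Set M) : List PForm → Set M
    | [] => 0
    | x :: xs => PForm.interp v x + AForm.interp v xs
end

variable (v : ℕ → Set M)

@[simp]
theorem AForm.interp_nil : AForm.interp v [] = 0 := by
  rw [AForm.interp]

@[simp]
theorem AForm.interp_cons (x : PForm) (xs : List PForm) :
    AForm.interp v (x :: xs) = PForm.interp v x + AForm.interp v xs := by
  rw [AForm.interp]

@[simp]
theorem AForm.interp_append (G H : List PForm) :
    AForm.interp v (G ++ H) = AForm.interp v G + AForm.interp v H := by
  induction G with
  | nil => simp
  | cons x xs ih => simp [ih, add_assoc]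

@[simp]
theorem AForm.interp_singleton (x : PForm) : AForm.interp v [x] = PForm.interp v x := by
  simp

theorem PForm.mem_interp_imp {A B : AForm} {m : M} :
    m ∈ PForm.interp v (.imp A B) ↔ ∀ a ∈ AForm.interp v A, a + m ∈ AForm.interp v B := by
  rw [PForm.interp]; rfl

theorem PForm.add_interp_imp_subset {C A B : AForm}
    (h : AForm.interp v C ⊆ AForm.interp v A) :
    AForm.interp v C + PForm.interp v (.imp A B) ⊆ AForm.interp v B := by
  rintro _ ⟨c, hc, f, hf, rfl⟩
  exact (PForm.mem_interp_imp v).1 hf c (h hc)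

theorem PForm.subset_interp_imp {A G C : AForm}
    (h : AForm.interp v A + AForm.interp v G ⊆ AForm.interp v C) :
    AForm.interp v G ⊆ PForm.interp v (.imp A C) :=
  fun _ hm ↦ (PForm.mem_interp_imp v).2 fun _ ha ↦ h (add_mem_add ha hm)

theorem ILDeriv.interp_subset {G D : AForm} (h : ILDeriv G D) :
    AForm.interp v G ⊆ AForm.interp v D := by
  induction h with
  | ax _ => exact subset_rfl
  | interchange _ ih =>
    simp only [AForm.interp_append] at ih ⊢
    rwa [add_right_comm (AForm.interp v _) (AForm.interp v _)] at ih
  | cut _ _ ih₁ ih₂ =>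
    simp only [AForm.interp_append] at ih₂ ⊢
    exact (add_subset_add (add_subset_add subset_rfl ih₁) subset_rfl).trans ih₂
  | impL _ _ ih₁ ih₂ =>
    simp only [AForm.interp_append, AForm.interp_singleton] at ih₂ ⊢
    exact (add_subset_add (PForm.add_interp_imp_subset v ih₁) subset_rfl).trans ih₂
  | impR _ ih =>
    rw [AForm.interp_singleton]
    exact PForm.subset_interp_imp v (by rwa [AForm.interp_append] at ih)
  | tensR _ _ ih₁ ih₂ =>
    simp only [AForm.interp_append]
    exact add_subset_add ih₁ ih₂

end Semantics

section Universal

variable [AddCommGroup M]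

mutual
  theorem PForm.interp_univ_of_Ifree {P : PForm} (hP : P.Ifree) :
      PForm.interp (fun _ ↦ (univ : Set M)) P = univ := by
    match P, hP with
    | .atom _, _ => rw [PForm.interp]
    | .imp A B, ⟨_, hB, _, hB'⟩ =>
      have hBuniv := AForm.interp_univ_of_Ifree ⟨hB, hB'⟩
      exact eq_univ_of_forall fun _ ↦
        (PForm.mem_interp_imp _).2 fun _ _ ↦ by rw [hBuniv]; exact mem_univ _
  theorem AForm.interp_univ_of_Ifree {A : AForm} (hA : A.Ifree) :
      AForm.interp (fun _ ↦ (univ : Set M)) A = univ := by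
    match A, hA with
    | x :: xs, ⟨_, hx, hxs⟩ =>
      have hxs_nonempty : (AForm.interp (fun _ ↦ (univ : Set M)) xs).Nonempty := by
        match xs, hxs with
        | [], _ => exact ⟨0, by simp⟩
        | _ :: _, hxs =>
          rw [AForm.interp_univ_of_Ifree ⟨List.cons_ne_nil _ _, hxs⟩]
          exact univ_nonempty
      rw [AForm.interp_cons, PForm.interp_univ_of_Ifree hx, univ_add hxs_nonempty]
end

end Universal

/-- There is no derivation in `IL` of `A ⊢ I` with `A` an `I`-free α-formula. -/
theorem no_Ifree_derives_unit (A : AForm) (hA : A.Ifree) :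
    ¬ILDeriv A ([] : AForm) := by
  intro h
  have hsub := h.interp_subset (fun _ ↦ (univ : Set ℤ))
  rw [AForm.interp_univ_of_Ifree hA, AForm.interp_nil] at hsub
  exact one_ne_zero (hsub (mem_univ (1 : ℤ)))
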